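/- arXiv:2412.07321 — 8 statements merged into one kernel-verified Lean document; each statement's English description precedes it below -/
import Mathlib

section
/- Let s>1 and N>1 be integers and let ω₀>0. For n=1,…,N and i=1,…,s let v_{n,i}, g_{n,i}, g̃_{n,i} be nonnegative real numbers with the compatibility condition v_{n,s}=v_{n+1,1} for 1≤n≤N−1; write v_n:=v_{n,s} and v_0:=v_{1,1}. Let τ_n>0 for 1≤n≤N, set t_n:=τ_1+⋯+τ_n, t_0:=0, and τ:=max_{1≤n≤N}τ_n. Assume that v_{n,i} ≤ v_{n,1} + ω₀ τ_n ∑_{j=1}^{i−1} v_{n,j} + ∑_{j=2}^{i} g_{n,j} + g̃_{n,i} for all 1≤n≤N and 2≤i≤s. If τ ≤ 1/ω₀, then for all 1≤n≤N and 2≤i≤s: v_{n,i} ≤ 4^{s−1} · exp(2^{s−1} ω₀ t_{n−1}) · ( v_0 + ∑_{k=1}^{n−1} ∑_{j=2}^{s} g_{k,j} + ∑_{j=2}^{i} g_{n,j} + ∑_{k=1}^{n} max_{2≤j≤s} g̃_{k,j} ). -/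
/-!
Within one time step the stage inequality is a discrete Volterra inequality with constant
`c = ω₀ τₙ`; induction on the stage index gives `v_{n,i} ≤ (1 + c)^{i-1} b_{n,i}`, where
`b_{n,i} = v_{n,1} + ∑_{2 ≤ j ≤ i} g_{n,j} + max_j g̃_{n,j}` is nondecreasing in `i`.
For `c ≤ 1` the factor is at most `2^{s-1}`, and in general `(1 + c)^{s-1} ≤ exp (2^{s-1} c)`.
The latter, applied to the last stage and chained over the time steps through
`v_{n,s} = v_{n+1,1}`, is a one-step-per-level discrete Grönwall inequality for `v_{n,1}`.
-/

open Finset Real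

theorem le_one_add_pow_mul_of_le_mul_sum_add {s : ℕ} {c : ℝ} (hc : 0 ≤ c) {u b : ℕ → ℝ}
    (hb : MonotoneOn b (Icc 1 s))
    (h : ∀ i ∈ Icc 1 s, u i ≤ c * ∑ j ∈ Icc 1 (i - 1), u j + b i) :
    ∀ i ∈ Icc 1 s, u i ≤ (1 + c) ^ (i - 1) * b i := by
  have hsum : ∀ m < s, c * ∑ j ∈ Icc 1 m, u j ≤ ((1 + c) ^ m - 1) * b (m + 1) := by
    intro m
    induction m with
    | zero => intro _; simp
    | succ m ih =>
      intro hm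
      have hu : u (m + 1) ≤ (1 + c) ^ m * b (m + 1) := by
        have := h (m + 1) (mem_Icc.2 ⟨by omega, by omega⟩)
        rw [Nat.add_sub_cancel] at this
        linarith [ih (by omega)]
      have hb' : b (m + 1) ≤ b (m + 2) :=
        hb (mem_Icc.2 ⟨by omega, by omega⟩) (mem_Icc.2 ⟨by omega, by omega⟩) (by omega)
      have hcoef : 0 ≤ (1 + c) ^ (m + 1) - 1 := sub_nonneg.2 (one_le_pow₀ (by linarith))
      calc c * ∑ j ∈ Icc 1 (m + 1), u j = c * ∑ j ∈ Icc 1 m, u j + c * u (m + 1) := by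
            rw [sum_Icc_succ_top (by omega), mul_add]
        _ ≤ ((1 + c) ^ m - 1) * b (m + 1) + c * ((1 + c) ^ m * b (m + 1)) :=
            add_le_add (ih (by omega)) (mul_le_mul_of_nonneg_left hu hc)
        _ = ((1 + c) ^ (m + 1) - 1) * b (m + 1) := by ring
        _ ≤ ((1 + c) ^ (m + 1) - 1) * b (m + 2) := mul_le_mul_of_nonneg_left hb' hcoef
  intro i hi
  obtain ⟨hi1, his⟩ := mem_Icc.1 hi
  have := hsum (i - 1) (by omega)
  rw [Nat.sub_add_cancel hi1] at this
  linarith [h i hi]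

theorem le_one_add_pow_mul_of_stage_le {s : ℕ} {c M : ℝ} (hc : 0 ≤ c) (hM : 0 ≤ M)
    {u g gt : ℕ → ℝ} (hg : ∀ j ∈ Icc 2 s, 0 ≤ g j) (hgt : ∀ j ∈ Icc 2 s, gt j ≤ M)
    (h : ∀ i, 2 ≤ i → i ≤ s →
      u i ≤ u 1 + c * (∑ j ∈ Icc 1 (i - 1), u j) + (∑ j ∈ Icc 2 i, g j) + gt i) :
    ∀ i ∈ Icc 1 s, u i ≤ (1 + c) ^ (i - 1) * (u 1 + ∑ j ∈ Icc 2 i, g j + M) := by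
  refine le_one_add_pow_mul_of_le_mul_sum_add hc (fun i _ k hk hik => ?_) (fun i hi => ?_)
  · have hsub : Icc 2 i ⊆ Icc 2 k := Icc_subset_Icc_right hik
    have := sum_le_sum_of_subset_of_nonneg hsub fun j hj _ =>
      hg j (Icc_subset_Icc_right (mem_Icc.1 hk).2 hj)
    linarith
  · obtain ⟨hi1, his⟩ := mem_Icc.1 hi
    rcases hi1.eq_or_lt with rfl | hi2
    · simp [hM]
    · linarith [h i hi2 his, hgt i (mem_Icc.2 ⟨hi2, his⟩)]

theorem stage_le_two_pow_mul {s : ℕ} {c M : ℝ} (hc : 0 ≤ c) (hc1 : c ≤ 1) (hM : 0 ≤ M)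
    {u g gt : ℕ → ℝ} (hu : 0 ≤ u 1) (hg : ∀ j ∈ Icc 2 s, 0 ≤ g j)
    (hgt : ∀ j ∈ Icc 2 s, gt j ≤ M)
    (h : ∀ i, 2 ≤ i → i ≤ s →
      u i ≤ u 1 + c * (∑ j ∈ Icc 1 (i - 1), u j) + (∑ j ∈ Icc 2 i, g j) + gt i) :
    ∀ i ∈ Icc 1 s, u i ≤ 2 ^ (s - 1) * (u 1 + ∑ j ∈ Icc 2 i, g j + M) := by
  intro i hi
  have his := (mem_Icc.1 hi).2
  have hb : 0 ≤ u 1 + ∑ j ∈ Icc 2 i, g j + M := by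
    have := sum_nonneg fun j hj => hg j (Icc_subset_Icc_right his hj)
    positivity
  calc u i ≤ (1 + c) ^ (i - 1) * (u 1 + ∑ j ∈ Icc 2 i, g j + M) :=
        le_one_add_pow_mul_of_stage_le hc hM hg hgt h i hi
    _ ≤ 2 ^ (s - 1) * (u 1 + ∑ j ∈ Icc 2 i, g j + M) := by
        gcongr
        calc (1 + c) ^ (i - 1) ≤ 2 ^ (i - 1) := by gcongr; linarith
          _ ≤ 2 ^ (s - 1) := pow_le_pow_right₀ one_le_two (by omega)

theorem one_add_pow_le_exp_two_pow_mul {c : ℝ} (hc : 0 ≤ c) (m : ℕ) :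
    (1 + c) ^ m ≤ exp (2 ^ m * c) :=
  calc (1 + c) ^ m ≤ exp c ^ m :=
        pow_le_pow_left₀ (by linarith) (by linarith [add_one_le_exp c]) m
    _ = exp (m * c) := (exp_nat_mul c m).symm
    _ ≤ exp (2 ^ m * c) := by
        gcongr
        exact_mod_cast Nat.lt_two_pow_self.le

theorem last_stage_le_exp_mul {s : ℕ} (hs : 1 ≤ s) {c M : ℝ} (hc : 0 ≤ c) (hM : 0 ≤ M)
    {u g gt : ℕ → ℝ} (hu : 0 ≤ u 1) (hg : ∀ j ∈ Icc 2 s, 0 ≤ g j)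
    (hgt : ∀ j ∈ Icc 2 s, gt j ≤ M)
    (h : ∀ i, 2 ≤ i → i ≤ s →
      u i ≤ u 1 + c * (∑ j ∈ Icc 1 (i - 1), u j) + (∑ j ∈ Icc 2 i, g j) + gt i) :
    u s ≤ exp (2 ^ (s - 1) * c) * (u 1 + (∑ j ∈ Icc 2 s, g j + M)) := by
  have hb : 0 ≤ u 1 + ∑ j ∈ Icc 2 s, g j + M := by
    have := sum_nonneg hg
    positivity
  rw [← add_assoc]
  calc u s ≤ (1 + c) ^ (s - 1) * (u 1 + ∑ j ∈ Icc 2 s, g j + M) :=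
        le_one_add_pow_mul_of_stage_le hc hM hg hgt h s (mem_Icc.2 ⟨hs, le_rfl⟩)
    _ ≤ _ := mul_le_mul_of_nonneg_right (one_add_pow_le_exp_two_pow_mul hc _) hb

theorem le_exp_sum_mul_of_le_exp_mul {y θ f : ℕ → ℝ} {m : ℕ}
    (hθ : ∀ k ∈ Icc 1 m, 0 ≤ θ k) (hf : ∀ k ∈ Icc 1 m, 0 ≤ f k)
    (h : ∀ k ∈ Icc 1 m, y (k + 1) ≤ exp (θ k) * (y k + f k)) :
    y (m + 1) ≤ exp (∑ k ∈ Icc 1 m, θ k) * (y 1 + ∑ k ∈ Icc 1 m, f k) := by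
  induction m with
  | zero => simp
  | succ m ih =>
    have hsub : Icc 1 m ⊆ Icc 1 (m + 1) := Icc_subset_Icc_right (by omega)
    have hlast : m + 1 ∈ Icc 1 (m + 1) := by simp
    have hE : 1 ≤ exp (∑ k ∈ Icc 1 m, θ k) :=
      one_le_exp (sum_nonneg fun k hk => hθ k (hsub hk))
    rw [sum_Icc_succ_top (by omega), sum_Icc_succ_top (by omega), exp_add]
    calc y (m + 1 + 1) ≤ exp (θ (m + 1)) * (y (m + 1) + f (m + 1)) := h _ hlast
      _ ≤ exp (θ (m + 1)) * (exp (∑ k ∈ Icc 1 m, θ k) * (y 1 + ∑ k ∈ Icc 1 m, f k)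
            + exp (∑ k ∈ Icc 1 m, θ k) * f (m + 1)) := by
          gcongr
          · exact ih (fun k hk => hθ k (hsub hk)) (fun k hk => hf k (hsub hk))
              (fun k hk => h k (hsub hk))
          · exact le_mul_of_one_le_left (hf _ hlast) hE
      _ = _ := by ring

theorem first_stage_le_exp_mul {s N : ℕ} (hs : 1 < s) {ω₀ : ℝ} (hω₀ : 0 ≤ ω₀)
    {v g gt : ℕ → ℕ → ℝ} {τ : ℕ → ℝ}
    (hv : ∀ n, 1 ≤ n → n ≤ N → 0 ≤ v n 1)
    (hg : ∀ n i, 1 ≤ n → n ≤ N → 1 ≤ i → i ≤ s → 0 ≤ g n i)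
    (hgt : ∀ n i, 1 ≤ n → n ≤ N → 1 ≤ i → i ≤ s → 0 ≤ gt n i)
    (hτ : ∀ n, 1 ≤ n → n ≤ N → 0 ≤ τ n)
    (hcompat : ∀ n, 1 ≤ n → n ≤ N - 1 → v n s = v (n + 1) 1)
    (hineq : ∀ n i, 1 ≤ n → n ≤ N → 2 ≤ i → i ≤ s →
      v n i ≤ v n 1 + ω₀ * τ n * (∑ j ∈ Icc 1 (i - 1), v n j)
        + (∑ j ∈ Icc 2 i, g n j) + gt n i)
    {m : ℕ} (hm : m + 1 ≤ N) :
    v (m + 1) 1 ≤ exp (2 ^ (s - 1) * ω₀ * ∑ k ∈ Icc 1 m, τ k)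
      * (v 1 1 + ∑ k ∈ Icc 1 m,
        (∑ j ∈ Icc 2 s, g k j + (Icc 2 s).sup' (nonempty_Icc.mpr hs) (gt k))) := by
  rw [mul_sum]
  refine le_exp_sum_mul_of_le_exp_mul (y := fun k => v k 1)
    (fun k hk => ?_) (fun k hk => ?_) (fun k hk => ?_) <;>
    obtain ⟨h1, h2⟩ := mem_Icc.1 hk <;> have hkN : k ≤ N := by omega
  · exact mul_nonneg (by positivity) (hτ k h1 hkN)
  · exact add_nonneg
      (sum_nonneg fun j hj => hg k j h1 hkN (by simp at hj; omega) (by simp at hj; omega))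
      (le_sup'_of_le (gt k) (mem_Icc.2 ⟨le_rfl, hs⟩) (hgt k 2 h1 hkN one_le_two hs))
  · rw [← hcompat k h1 (by omega), mul_assoc]
    exact last_stage_le_exp_mul hs.le (mul_nonneg hω₀ (hτ k h1 hkN))
      (le_sup'_of_le (gt k) (mem_Icc.2 ⟨le_rfl, hs⟩) (hgt k 2 h1 hkN one_le_two hs))
      (hv k h1 hkN) (fun j hj => hg k j h1 hkN (by simp at hj; omega) (mem_Icc.1 hj).2)
      (fun j hj => le_sup' (gt k) hj) (hineq k · h1 hkN)

theorem stmt0_general (s N : ℕ) (hs : 1 < s) (ω₀ : ℝ) (hω₀ : 0 < ω₀)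
    (v g gt : ℕ → ℕ → ℝ) (τ : ℕ → ℝ)
    (hv : ∀ n i, 1 ≤ n → n ≤ N → 1 ≤ i → i ≤ s → 0 ≤ v n i)
    (hg : ∀ n i, 1 ≤ n → n ≤ N → 1 ≤ i → i ≤ s → 0 ≤ g n i)
    (hgt : ∀ n i, 1 ≤ n → n ≤ N → 1 ≤ i → i ≤ s → 0 ≤ gt n i)
    (hτ : ∀ n, 1 ≤ n → n ≤ N → 0 < τ n)
    (hcompat : ∀ n, 1 ≤ n → n ≤ N - 1 → v n s = v (n + 1) 1)
    (hstep : ∀ n, 1 ≤ n → n ≤ N → τ n ≤ 1 / ω₀)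
    (hineq : ∀ n i, 1 ≤ n → n ≤ N → 2 ≤ i → i ≤ s →
      v n i ≤ v n 1 + ω₀ * τ n * (∑ j ∈ Icc 1 (i - 1), v n j)
        + (∑ j ∈ Icc 2 i, g n j) + gt n i) :
    ∀ n i, 1 ≤ n → n ≤ N → 2 ≤ i → i ≤ s →
      v n i ≤ (4 : ℝ) ^ (s - 1)
        * Real.exp ((2 : ℝ) ^ (s - 1) * ω₀ * ∑ k ∈ Icc 1 (n - 1), τ k)
        * (v 1 1 + (∑ k ∈ Icc 1 (n - 1), ∑ j ∈ Icc 2 s, g k j)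
          + (∑ j ∈ Icc 2 i, g n j)
          + ∑ k ∈ Icc 1 n, (Icc 2 s).sup' (Finset.nonempty_Icc.mpr hs) (gt k)) := by
  intro n i hn hnN hi his
  obtain ⟨m, rfl⟩ : ∃ m, n = m + 1 := ⟨n - 1, by omega⟩
  rw [Nat.add_sub_cancel, sum_Icc_succ_top (by omega)]
  have hstart := first_stage_le_exp_mul hs hω₀.le (hv · 1 · · le_rfl hs.le) hg hgt
    (fun k h1 h2 => (hτ k h1 h2).le) hcompat hineq hnN
  set M : ℕ → ℝ := fun k => (Icc 2 s).sup' (nonempty_Icc.mpr hs) (gt k)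
  set E := exp ((2 : ℝ) ^ (s - 1) * ω₀ * ∑ k ∈ Icc 1 m, τ k)
  have hE : 1 ≤ E := one_le_exp (by
    have := sum_nonneg fun k (hk : k ∈ Icc 1 m) =>
      (hτ k (mem_Icc.1 hk).1 (by simp at hk; omega)).le
    positivity)
  have hM : 0 ≤ M (m + 1) :=
    le_sup'_of_le (gt (m + 1)) (mem_Icc.2 ⟨le_rfl, hs⟩) (hgt (m + 1) 2 hn hnN one_le_two hs)
  have hG : 0 ≤ ∑ j ∈ Icc 2 i, g (m + 1) j :=
    sum_nonneg fun j hj => hg (m + 1) j hn hnN (by simp at hj; omega) (by simp at hj; omega)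
  have hc : 0 ≤ ω₀ * τ (m + 1) := by have := hτ (m + 1) hn hnN; positivity
  calc v (m + 1) i ≤ 2 ^ (s - 1) * (v (m + 1) 1 + ∑ j ∈ Icc 2 i, g (m + 1) j + M (m + 1)) :=
        stage_le_two_pow_mul hc ((le_div_iff₀' hω₀).1 (hstep (m + 1) hn hnN)) hM
          (hv (m + 1) 1 hn hnN le_rfl hs.le)
          (fun j hj => hg (m + 1) j hn hnN (by simp at hj; omega) (mem_Icc.1 hj).2)
          (fun j hj => le_sup' (gt (m + 1)) hj) (hineq (m + 1) · hn hnN) i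
          (mem_Icc.2 ⟨by omega, his⟩)
    _ ≤ 4 ^ (s - 1) * (E * (v 1 1 + ∑ k ∈ Icc 1 m, (∑ j ∈ Icc 2 s, g k j + M k)
          + ∑ j ∈ Icc 2 i, g (m + 1) j + M (m + 1))) := by
        gcongr
        · linarith [hv (m + 1) 1 hn hnN le_rfl hs.le]
        · norm_num
        · nlinarith
    _ = _ := by rw [sum_add_distrib]; ring

/-- Discrete Grönwall-type inequality for multi-stage time-stepping schemes. -/
theorem stmt0 (s N : ℕ) (hs : 1 < s) (hN : 1 < N) (ω₀ : ℝ) (hω₀ : 0 < ω₀)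
    (v g gt : ℕ → ℕ → ℝ) (τ : ℕ → ℝ)
    (hv : ∀ n i, 1 ≤ n → n ≤ N → 1 ≤ i → i ≤ s → 0 ≤ v n i)
    (hg : ∀ n i, 1 ≤ n → n ≤ N → 1 ≤ i → i ≤ s → 0 ≤ g n i)
    (hgt : ∀ n i, 1 ≤ n → n ≤ N → 1 ≤ i → i ≤ s → 0 ≤ gt n i)
    (hτ : ∀ n, 1 ≤ n → n ≤ N → 0 < τ n)
    (hcompat : ∀ n, 1 ≤ n → n ≤ N - 1 → v n s = v (n + 1) 1)
    (hstep : ∀ n, 1 ≤ n → n ≤ N → τ n ≤ 1 / ω₀)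
    (hineq : ∀ n i, 1 ≤ n → n ≤ N → 2 ≤ i → i ≤ s →
      v n i ≤ v n 1 + ω₀ * τ n * (∑ j ∈ Icc 1 (i - 1), v n j)
        + (∑ j ∈ Icc 2 i, g n j) + gt n i) :
    ∀ n i, 1 ≤ n → n ≤ N → 2 ≤ i → i ≤ s →
      v n i ≤ (4 : ℝ) ^ (s - 1)
        * Real.exp ((2 : ℝ) ^ (s - 1) * ω₀ * ∑ k ∈ Icc 1 (n - 1), τ k)
        * (v 1 1 + (∑ k ∈ Icc 1 (n - 1), ∑ j ∈ Icc 2 s, g k j)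
          + (∑ j ∈ Icc 2 i, g n j)
          + ∑ k ∈ Icc 1 n, (Icc 2 s).sup' (Finset.nonempty_Icc.mpr hs) (gt k)) :=
  stmt0_general s N hs ω₀ hω₀ v g gt τ hv hg hgt hτ hcompat hstep hineq
end

section
/- Let M be a real s×s lower triangular matrix whose symmetric part S(M):=(M+Mᵀ)/2 satisfies xᵀS(M)x ≥ λ|x|² for every x∈ℝ^s, where λ>0. Then M is invertible, M⁻¹ is lower triangular, and for all vectors v,u∈ℝ^s and every 1≤k≤s: ∑_{i=1}^{k} ∑_{j=1}^{i} (M⁻¹)_{ij} v_j u_i ≤ (1/λ) · ( ∑_{i=1}^{k} v_i² )^{1/2} · ( ∑_{i=1}^{k} u_i² )^{1/2}. -/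
/-!
The quadratic form of `(M + Mᵀ)/2` is that of `M`, so `λ‖y‖² ≤ yᵀ M y ≤ ‖y‖ ‖M y‖` by
Cauchy–Schwarz; hence `M` is injective and `‖M⁻¹ w‖ ≤ ‖w‖ / λ`. The inverse of a lower triangular
matrix is lower triangular, so for `i < k` the inner sum is `(M⁻¹ w)ᵢ` with `w` the truncation of
`v` to its first `k` entries, and Cauchy–Schwarz over the first `k` coordinates concludes.
-/

open Finset Matrix

section Coercive

variable {n : Type*} [Fintype n] {M : Matrix n n ℝ} {lam : ℝ}

theorem dotProduct_half_smul_add_transpose_mulVec {R : Type*} [Field R] [NeZero (2 : R)]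
    (A : Matrix n n R) (x : n → R) :
    x ⬝ᵥ ((1 / 2 : R) • (A + Aᵀ)) *ᵥ x = x ⬝ᵥ A *ᵥ x := by
  have hT : x ⬝ᵥ Aᵀ *ᵥ x = x ⬝ᵥ A *ᵥ x := by
    rw [mulVec_transpose, dotProduct_mulVec, dotProduct_comm]
  rw [smul_mulVec, add_mulVec, dotProduct_smul, dotProduct_add, hT, smul_eq_mul, ← two_mul,
    one_div, inv_mul_cancel_left₀ two_ne_zero]

theorem mul_sqrt_sum_sq_le_sqrt_sum_sq_mulVec
    (hM : ∀ x : n → ℝ, lam * (x ⬝ᵥ x) ≤ x ⬝ᵥ M *ᵥ x) (y : n → ℝ) :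
    lam * √(∑ i, y i ^ 2) ≤ √(∑ i, (M *ᵥ y) i ^ 2) := by
  have hyy : y ⬝ᵥ y = √(∑ i, y i ^ 2) ^ 2 := by
    rw [Real.sq_sqrt (sum_nonneg fun i _ => sq_nonneg _)]
    simp only [dotProduct, sq]
  have key : lam * √(∑ i, y i ^ 2) ^ 2 ≤ √(∑ i, y i ^ 2) * √(∑ i, (M *ᵥ y) i ^ 2) :=
    calc lam * √(∑ i, y i ^ 2) ^ 2 = lam * (y ⬝ᵥ y) := by rw [hyy]
      _ ≤ y ⬝ᵥ M *ᵥ y := hM y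
      _ ≤ _ := Real.sum_mul_le_sqrt_mul_sqrt _ _ _
  rcases (Real.sqrt_nonneg (∑ i, y i ^ 2)).eq_or_lt with hy | hy
  · rw [← hy, mul_zero]
    exact Real.sqrt_nonneg _
  · exact le_of_mul_le_mul_right (by linarith) hy

theorem det_ne_zero_of_coercive [DecidableEq n] (hlam : 0 < lam)
    (hM : ∀ x : n → ℝ, lam * (x ⬝ᵥ x) ≤ x ⬝ᵥ M *ᵥ x) : M.det ≠ 0 := by
  intro hdet
  obtain ⟨x, hx, hMx⟩ := exists_mulVec_eq_zero_iff.2 hdet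
  have hxx : lam * (x ⬝ᵥ x) ≤ 0 := by simpa [hMx] using hM x
  exact hx (dotProduct_self_eq_zero.1 (le_antisymm
    (nonpos_of_mul_nonpos_right hxx hlam) (sum_nonneg fun i _ => mul_self_nonneg (x i))))

theorem sqrt_sum_sq_inv_mulVec_le [DecidableEq n] (hlam : 0 < lam)
    (hM : ∀ x : n → ℝ, lam * (x ⬝ᵥ x) ≤ x ⬝ᵥ M *ᵥ x) (w : n → ℝ) :
    √(∑ i, (M⁻¹ *ᵥ w) i ^ 2) ≤ 1 / lam * √(∑ i, w i ^ 2) := by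
  have hMw : M *ᵥ (M⁻¹ *ᵥ w) = w := by
    rw [mulVec_mulVec, mul_nonsing_inv _ (det_ne_zero_of_coercive hlam hM).isUnit, one_mulVec]
  rw [one_div_mul_eq_div, le_div_iff₀' hlam]
  simpa only [hMw] using mul_sqrt_sum_sq_le_sqrt_sum_sq_mulVec hM (M⁻¹ *ᵥ w)

end Coercive

theorem Matrix.BlockTriangular.mulVec_apply_eq_sum_Iic {n R : Type*} [Fintype n] [LinearOrder n]
    [LocallyFiniteOrderBot n] [NonUnitalNonAssocSemiring R] {A : Matrix n n R}
    (hA : A.BlockTriangular OrderDual.toDual) (w : n → R) (i : n) :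
    (A *ᵥ w) i = ∑ j ∈ Iic i, A i j * w j := by
  refine (sum_subset (subset_univ _) fun j _ hj => ?_).symm
  have hij : i < j := lt_of_not_ge (mt mem_Iic.2 hj)
  exact mul_eq_zero_of_left (hA (OrderDual.toDual_lt_toDual.2 hij)) _

theorem stmt4_general (s : ℕ) (M : Matrix (Fin s) (Fin s) ℝ) (lam : ℝ) (hlam : 0 < lam)
    (hlow : ∀ i j : Fin s, i < j → M i j = 0)
    (hcoer : ∀ x : Fin s → ℝ,
      lam * (x ⬝ᵥ x) ≤ x ⬝ᵥ ((1 / 2 : ℝ) • (M + Mᵀ)).mulVec x)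
    (v u : Fin s → ℝ) (k : ℕ) :
    IsUnit M.det
    ∧ (∀ i j : Fin s, i < j → M⁻¹ i j = 0)
    ∧ ∑ i ∈ Finset.univ.filter (fun i : Fin s => (i : ℕ) < k),
          ∑ j ∈ Finset.Iic i, M⁻¹ i j * v j * u i
        ≤ (1 / lam)
          * Real.sqrt (∑ i ∈ Finset.univ.filter (fun i : Fin s => (i : ℕ) < k), v i ^ 2)
          * Real.sqrt (∑ i ∈ Finset.univ.filter (fun i : Fin s => (i : ℕ) < k), u i ^ 2) := by
  have hM : ∀ x : Fin s → ℝ, lam * (x ⬝ᵥ x) ≤ x ⬝ᵥ M *ᵥ x := fun x => by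
    simpa only [dotProduct_half_smul_add_transpose_mulVec] using hcoer x
  have hdet : IsUnit M.det := (det_ne_zero_of_coercive hlam hM).isUnit
  have : Invertible M := M.invertibleOfIsUnitDet hdet
  have hinv : M⁻¹.BlockTriangular OrderDual.toDual := blockTriangular_inv_of_blockTriangular hlow
  refine ⟨hdet, fun i j hij => hinv hij, ?_⟩
  set T := univ.filter fun i : Fin s => (i : ℕ) < k
  set w : Fin s → ℝ := fun j => if j ∈ T then v j else 0
  have hw : ∑ j, w j ^ 2 = ∑ j ∈ T, v j ^ 2 := by
    simp [w, ite_pow, sum_ite_mem]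
  have htrunc : ∀ i ∈ T, ∑ j ∈ Iic i, M⁻¹ i j * v j = (M⁻¹ *ᵥ w) i := fun i hi => by
    rw [hinv.mulVec_apply_eq_sum_Iic]
    refine sum_congr rfl fun j hj => ?_
    have hjT : j ∈ T := by
      simp only [T, mem_filter, mem_univ, true_and] at hi ⊢
      exact (Fin.le_iff_val_le_val.1 (mem_Iic.1 hj)).trans_lt hi
    simp only [w, if_pos hjT]
  calc ∑ i ∈ T, ∑ j ∈ Iic i, M⁻¹ i j * v j * u i = ∑ i ∈ T, (M⁻¹ *ᵥ w) i * u i :=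
        sum_congr rfl fun i hi => by rw [← htrunc i hi, sum_mul]
    _ ≤ √(∑ i ∈ T, (M⁻¹ *ᵥ w) i ^ 2) * √(∑ i ∈ T, u i ^ 2) :=
        Real.sum_mul_le_sqrt_mul_sqrt _ _ _
    _ ≤ √(∑ i, (M⁻¹ *ᵥ w) i ^ 2) * √(∑ i ∈ T, u i ^ 2) := by
        gcongr
        exact subset_univ T
    _ ≤ 1 / lam * √(∑ i ∈ T, v i ^ 2) * √(∑ i ∈ T, u i ^ 2) := by
        gcongr
        rw [← hw]
        exact sqrt_sum_sq_inv_mulVec_le hlam hM w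

/-- Bilinear bound for truncated convolution sums generated by the inverse of a
lower triangular matrix with coercive symmetric part. -/
theorem stmt4 (s : ℕ) (hs : 1 ≤ s) (M : Matrix (Fin s) (Fin s) ℝ) (lam : ℝ) (hlam : 0 < lam)
    (hlow : ∀ i j : Fin s, i < j → M i j = 0)
    (hcoer : ∀ x : Fin s → ℝ,
      lam * (x ⬝ᵥ x) ≤ x ⬝ᵥ ((1 / 2 : ℝ) • (M + Mᵀ)).mulVec x)
    (v u : Fin s → ℝ) (k : ℕ) (hk1 : 1 ≤ k) (hk2 : k ≤ s) :
    IsUnit M.det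
    ∧ (∀ i j : Fin s, i < j → M⁻¹ i j = 0)
    ∧ ∑ i ∈ Finset.univ.filter (fun i : Fin s => (i : ℕ) < k),
          ∑ j ∈ Finset.Iic i, M⁻¹ i j * v j * u i
        ≤ (1 / lam)
          * Real.sqrt (∑ i ∈ Finset.univ.filter (fun i : Fin s => (i : ℕ) < k), v i ^ 2)
          * Real.sqrt (∑ i ∈ Finset.univ.filter (fun i : Fin s => (i : ℕ) < k), u i ^ 2) :=
  stmt4_general s M lam hlam hlow hcoer v u k
end

section
/- Let s ≥ 2 be an integer and set s_I := s−1. Let Â = (â_{ij}) be a real s×s strictly lower triangular matrix with â_{21} ≠ 0, and let A = (a_{ij}) be a real s×s lower triangular matrix whose first row is zero. Assume the canopy node condition ∑_{j=1}^{s} a_{ij} = ∑_{j=1}^{s} â_{ij} for every 1≤i≤s. Define the s_I×s_I matrices A_I := (a_{i+1,j+1})_{1≤i,j≤s_I} and A_E := (â_{i+1,j})_{1≤i,j≤s_I}, and let E be the s_I×s_I lower triangular matrix with all entries on and below the diagonal equal to 1 and I the s_I×s_I identity. If A_I = A_E · (I − (1/2)E⁻¹), then a_{i+1,1} = (1/2)â_{i+1,1}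 for every 1≤i≤s_I; in particular a_{21} = â_{21}/2 ≠ 0, so the first column of A below the first row cannot vanish. Hence no Radau-type (ARS-type) implicit-explicit Runge–Kutta method (one with a_{i1}=0 for all i) can satisfy A_I = A_E(I − (1/2)E⁻¹). -/
/-! Multiplying `A_I = A_E (I − ½E⁻¹)` by the all-ones vector and using `E⁻¹𝟙 = e₁` gives the
row sums `A_I𝟙 = A_E𝟙 − ½ A_E e₁`. Since the last column of `Â` vanishes, the canopy condition
for row `i + 1` reads `a_{i+1,1} + (A_I𝟙)_i = (A_E𝟙)_i`, whence `a_{i+1,1} = ½ â_{i+1,1}`. -/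

open Matrix

section lowerOnes

variable (n : ℕ) (R : Type*) [CommRing R]

def lowerOnes : Matrix (Fin n) (Fin n) R :=
  of fun i j => if j ≤ i then 1 else 0

variable {n R}

@[simp]
theorem lowerOnes_apply (i j : Fin n) : lowerOnes n R i j = if j ≤ i then 1 else 0 := rfl

theorem isLowerTriangular_lowerOnes : (lowerOnes n R).IsLowerTriangular := by
  intro i j hij
  exact if_neg (not_le.mpr (OrderDual.toDual_lt_toDual.mp hij))

theorem det_lowerOnes : (lowerOnes n R).det = 1 := by
  simp [det_of_isLowerTriangular _ isLowerTriangular_lowerOnes]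

theorem lowerOnes_mulVec_single_zero [NeZero n] : lowerOnes n R *ᵥ Pi.single 0 1 = 1 := by
  ext i
  simp

theorem inv_lowerOnes_mulVec_one [NeZero n] : (lowerOnes n R)⁻¹ *ᵥ 1 = Pi.single 0 1 := by
  rw [← lowerOnes_mulVec_single_zero, mulVec_mulVec,
    nonsing_inv_mul _ (by simp [det_lowerOnes]), one_mulVec]

theorem sum_row_eq_of_eq_mul_sub_smul_inv_lowerOnes [NeZero n] {AI AE : Matrix (Fin n) (Fin n) R}
    (c : R) (h : AI = AE * (1 - c • (lowerOnes n R)⁻¹)) (i : Fin n) :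
    ∑ k, AI i k = ∑ k, AE i k - c * AE i 0 := by
  have hvec : AI *ᵥ 1 = AE *ᵥ 1 - c • AE *ᵥ Pi.single 0 1 := by
    rw [h, ← mulVec_mulVec, sub_mulVec, one_mulVec, smul_mulVec, inv_lowerOnes_mulVec_one,
      mulVec_sub, mulVec_smul]
  simpa [mulVec, dotProduct] using congrFun hvec i

end lowerOnes

theorem sum_eq_sum_castSucc_of_last_eq_zero {M : Type*} [AddCommMonoid M] {n : ℕ}
    {f : Fin (n + 1) → M} (hf : f (Fin.last n) = 0) : ∑ j, f j = ∑ k : Fin n, f k.castSucc := by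
  rw [Fin.sum_univ_castSucc, hf, add_zero]

theorem stmt8_general (sI : ℕ) (hsI : 1 ≤ sI)
    (A Ah : Matrix (Fin (sI + 1)) (Fin (sI + 1)) ℝ)
    (hAh_strict : ∀ i j : Fin (sI + 1), i ≤ j → Ah i j = 0)
    (hAh21 : Ah 1 0 ≠ 0)
    (hcanopy : ∀ i : Fin (sI + 1), ∑ j, A i j = ∑ j, Ah i j)
    (AI AE : Matrix (Fin sI) (Fin sI) ℝ)
    (hAI : ∀ i j : Fin sI, AI i j = A i.succ j.succ)
    (hAE : ∀ i j : Fin sI, AE i j = Ah i.succ j.castSucc)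
    (E : Matrix (Fin sI) (Fin sI) ℝ)
    (hE : ∀ i j : Fin sI, E i j = if j ≤ i then 1 else 0)
    (hrefined : AI = AE * (1 - (1 / 2 : ℝ) • E⁻¹)) :
    (∀ i : Fin sI, A i.succ 0 = (1 / 2) * Ah i.succ 0)
    ∧ A 1 0 = Ah 1 0 / 2
    ∧ A 1 0 ≠ 0
    ∧ ¬(∀ i : Fin (sI + 1), A i 0 = 0) := by
  obtain ⟨n, rfl⟩ := Nat.exists_eq_add_of_le' hsI
  obtain rfl : E = lowerOnes (n + 1) ℝ := Matrix.ext hE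
  have hfirst (i : Fin (n + 1)) : A i.succ 0 = (1 / 2) * Ah i.succ 0 := by
    have hc := hcanopy i.succ
    rw [Fin.sum_univ_succ, sum_eq_sum_castSucc_of_last_eq_zero (hAh_strict _ _ (Fin.le_last _))]
      at hc
    simp only [← hAI, ← hAE] at hc
    have hrow := sum_row_eq_of_eq_mul_sub_smul_inv_lowerOnes _ hrefined i
    rw [hAE, Fin.castSucc_zero] at hrow
    linarith
  have h10 : A 1 0 = Ah 1 0 / 2 := by
    rw [← Fin.succ_zero_eq_one, hfirst]
    ring
  have hne : A 1 0 ≠ 0 := h10 ▸ div_ne_zero hAh21 two_ne_zero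
  exact ⟨hfirst, h10, hne, fun h => hne (h 1)⟩

/-- For a refined IERK method (`A_I = A_E (I − (1/2)E⁻¹)`) satisfying the canopy node
condition, the first column of the implicit tableau below the first row equals half
of that of the explicit tableau; in particular it cannot vanish, so no Radau-type
(ARS-type) method is refined. -/
theorem stmt8 (sI : ℕ) (hsI : 1 ≤ sI)
    (A Ah : Matrix (Fin (sI + 1)) (Fin (sI + 1)) ℝ)
    (hAh_strict : ∀ i j : Fin (sI + 1), i ≤ j → Ah i j = 0)
    (hAh21 : Ah 1 0 ≠ 0)
    (hA_lower : ∀ i j : Fin (sI + 1), i < j → A i j = 0)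
    (hA_first : ∀ j : Fin (sI + 1), A 0 j = 0)
    (hcanopy : ∀ i : Fin (sI + 1), ∑ j, A i j = ∑ j, Ah i j)
    (AI AE : Matrix (Fin sI) (Fin sI) ℝ)
    (hAI : ∀ i j : Fin sI, AI i j = A i.succ j.succ)
    (hAE : ∀ i j : Fin sI, AE i j = Ah i.succ j.castSucc)
    (E : Matrix (Fin sI) (Fin sI) ℝ)
    (hE : ∀ i j : Fin sI, E i j = if j ≤ i then 1 else 0)
    (hrefined : AI = AE * (1 - (1 / 2 : ℝ) • E⁻¹)) :
    (∀ i : Fin sI, A i.succ 0 = (1 / 2) * Ah i.succ 0)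
    ∧ A 1 0 = Ah 1 0 / 2
    ∧ A 1 0 ≠ 0
    ∧ ¬(∀ i : Fin (sI + 1), A i 0 = 0) :=
  stmt8_general sI hsI A Ah hAh_strict hAh21 hcanopy AI AE hAI hAE E hE hrefined
end

section
/- There exist no real numbers c₂, â₃₁, â₃₂ such that â₃₁ + â₃₂ = 1, â₃₂·c₂ = 1/2, and (â₃₁+â₃₂)·c₂/2 + â₃₂/2 = 1/2 simultaneously hold. Consequently there is no 3-stage refined implicit-explicit Runge–Kutta method of second-order accuracy. -/
/-! The first and third conditions give `â₃₂ = 1 - c₂`, so the second becomes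
`c₂ (1 - c₂) = 1/2`, whereas `c₂ (1 - c₂) ≤ 1/4` for every real `c₂`. -/

theorem mul_one_sub_self_le_quarter (c : ℝ) : c * (1 - c) ≤ 1 / 4 := by
  nlinarith [sq_nonneg (c - 1 / 2)]

/-- Nonexistence of a 3-stage second-order refined IERK method: the order
conditions `â₃₁ + â₃₂ = 1`, `â₃₂ c₂ = 1/2` and `(â₃₁+â₃₂)c₂/2 + â₃₂/2 = 1/2`
have no real solution. -/
theorem stmt11 : ¬ ∃ c₂ a31 a32 : ℝ,
    a31 + a32 = 1 ∧ a32 * c₂ = 1 / 2 ∧ (a31 + a32) * c₂ / 2 + a32 / 2 = 1 / 2 := by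
  rintro ⟨c₂, a31, a32, h_sum, h_quad, h_lin⟩
  have h_a32 : a32 = 1 - c₂ := by
    rw [h_sum] at h_lin
    linarith
  have h_half : c₂ * (1 - c₂) = 1 / 2 := by
    rw [← h_a32, mul_comm]
    exact h_quad
  linarith [mul_one_sub_self_le_quarter c₂]
end

section
/- Let c₂ > 0 and let c₃ be a real number satisfying c₃² − (1/(2c₂) + c₂)·c₃ + (c₂−1)² = 0. Define the 3×3 real lower triangular matrix D with entries D₁₁ = D₂₂ = D₃₃ = 1/c₂, D₂₁ = (2c₂ − c₃)/c₂², D₃₁ = (4c₂³ − 2c₂² − c₂ + 2c₂²c₃ + c₃ − 2c₂c₃²)/(2c₂⁴), D₃₂ = (2c₂² + 2c₃c₂ − 1)/(2c₂³), and all other entries zero, and let S(D) := (D+Dᵀ)/2 be its symmetric part. Then the determinant of the leading 2×2 principal submatrix of S(D) equals c₃(4c₂ − c₃)/(4c₂⁴), and det S(D) = (c₂−1)²(2c₂² + 2c₂ − 1)/(8c₂⁷). -/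
open Matrix

/-!
The symmetric part of a lower triangular matrix with constant diagonal `d` and strictly lower
entries `p, q, r` keeps `d` on the diagonal and has `p/2, q/2, r/2` off it, so its leading
principal minors are `d² - p²/4` and `d³ + pqr/4 - d(p² + q² + r²)/4`. With the entries of `D`
the first is an identity in `c₂, c₃`; the second holds modulo the order condition on `c₃`.
-/

section SymmetricPart

variable {K : Type*} [Field K] [NeZero (2 : K)]

theorem symmPart_lowerTriangular_fin_three (d p q r : K) :
    (1 / 2 : K) • (!![d, 0, 0; p, d, 0; q, r, d] + !![d, 0, 0; p, d, 0; q, r, d]ᵀ) =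
      !![d, p / 2, q / 2; p / 2, d, r / 2; q / 2, r / 2, d] := by
  ext i j
  fin_cases i <;> fin_cases j <;>
    simp [← two_mul, div_eq_inv_mul, inv_mul_cancel_left₀ (two_ne_zero (α := K))]

theorem det_leading_symmPart_lowerTriangular_fin_three (d p q r : K) :
    let S := (1 / 2 : K) • (!![d, 0, 0; p, d, 0; q, r, d] + !![d, 0, 0; p, d, 0; q, r, d]ᵀ)
    det !![S 0 0, S 0 1; S 1 0, S 1 1] = d ^ 2 - p ^ 2 / 4 := by
  intro S
  rw [show S = _ from symmPart_lowerTriangular_fin_three d p q r, det_fin_two_of]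
  simp only [of_apply, cons_val', cons_val_zero, cons_val_fin_one, cons_val_one]
  field_simp [show (4 : K) = 2 * 2 by norm_num]
  ring

theorem det_symmPart_lowerTriangular_fin_three (d p q r : K) :
    det ((1 / 2 : K) • (!![d, 0, 0; p, d, 0; q, r, d] + !![d, 0, 0; p, d, 0; q, r, d]ᵀ)) =
      d ^ 3 + p * q * r / 4 - d * (p ^ 2 + q ^ 2 + r ^ 2) / 4 := by
  rw [symmPart_lowerTriangular_fin_three, det_fin_three]
  simp only [of_apply, cons_val', cons_val_zero, cons_val_fin_one, cons_val_one, cons_val]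
  field_simp [show (4 : K) = 2 * 2 by norm_num]
  ring

end SymmetricPart

/-- Principal minors of the symmetric part of the differentiation matrix
`D_R^{(2,4)}(c₂)` of the second-order 4-stage refined IERK method. -/
theorem stmt13 (c₂ c₃ : ℝ) (hc₂ : 0 < c₂)
    (hc₃ : c₃ ^ 2 - (1 / (2 * c₂) + c₂) * c₃ + (c₂ - 1) ^ 2 = 0) :
    let D : Matrix (Fin 3) (Fin 3) ℝ :=
      !![1 / c₂, 0, 0;
         (2 * c₂ - c₃) / c₂ ^ 2, 1 / c₂, 0;
         (4 * c₂ ^ 3 - 2 * c₂ ^ 2 - c₂ + 2 * c₂ ^ 2 * c₃ + c₃ - 2 * c₂ * c₃ ^ 2)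
             / (2 * c₂ ^ 4),
           (2 * c₂ ^ 2 + 2 * c₃ * c₂ - 1) / (2 * c₂ ^ 3), 1 / c₂]
    let S : Matrix (Fin 3) (Fin 3) ℝ := (1 / 2 : ℝ) • (D + Dᵀ)
    Matrix.det !![S 0 0, S 0 1; S 1 0, S 1 1] = c₃ * (4 * c₂ - c₃) / (4 * c₂ ^ 4)
    ∧ S.det = (c₂ - 1) ^ 2 * (2 * c₂ ^ 2 + 2 * c₂ - 1) / (8 * c₂ ^ 7) := by
  intro D S
  have hc₂ : c₂ ≠ 0 := hc₂.ne'
  have hc₃ : 2 * c₂ * c₃ ^ 2 - (1 + 2 * c₂ ^ 2) * c₃ + 2 * c₂ * (c₂ - 1) ^ 2 = 0 := by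
    field_simp at hc₃
    linear_combination hc₃
  refine ⟨(det_leading_symmPart_lowerTriangular_fin_three _ _ _ _).trans ?_,
    (det_symmPart_lowerTriangular_fin_three _ _ _ _).trans ?_⟩
  · field_simp
    ring
  · field_simp
    linear_combination (8 * c₂ - 16 * c₂ ^ 2 - 32 * c₂ ^ 3) * hc₃
end

section
/- Let c₂ > 0 and let c₃ be a real number satisfying c₃² − (1/(2c₂) + c₂)·c₃ + (c₂−1)² = 0. Define the vectors c := (0, c₂, c₃, 1), b := ( (1+c₃−c₂)/2 − 1/(4c₂), (1−c₂)/2, 1/(4c₂) + (c₂−c₃)/2, c₂/2 ), and b̂ := ( 1 − 1/(2c₂) + c₃ − c₂, 1/(2c₂) − c₃, c₂, 0 ) in ℝ⁴. Then the first- and second-order Runge–Kutta order conditions hold: ∑_k b_k = 1, ∑_k b̂_k = 1, ∑_k b_k c_k = 1/2, and ∑_k b̂_k c_k = 1/2. -/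
/-!
Each order condition is a polynomial identity in `c₂`, `c₃` and `c₂⁻¹`. The two consistency
conditions `∑ b = ∑ b̂ = 1` hold identically, `∑ b̂ c = c₂ / (2 c₂)` needs only `c₂ ≠ 0`, and
`2 ∑ b c - 1` is, up to sign, the defining quadratic of `c₃`. Over `ℝ` that quadratic also forces
`c₂ ≠ 0`, since at `c₂ = 0` it reads `c₃² + 1 = 0`.
-/

namespace RIERK24

variable {K : Type*} [Field K] [CharZero K]

def abscissae (c₂ c₃ : K) : Fin 4 → K := ![0, c₂, c₃, 1]

def implicitWeights (c₂ c₃ : K) : Fin 4 → K :=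
  ![(1 + c₃ - c₂) / 2 - 1 / (4 * c₂), (1 - c₂) / 2, 1 / (4 * c₂) + (c₂ - c₃) / 2, c₂ / 2]

def explicitWeights (c₂ c₃ : K) : Fin 4 → K :=
  ![1 - 1 / (2 * c₂) + c₃ - c₂, 1 / (2 * c₂) - c₃, c₂, 0]

theorem sum_implicitWeights (c₂ c₃ : K) : ∑ k, implicitWeights c₂ c₃ k = 1 := by
  simp only [implicitWeights, Fin.sum_univ_four, Matrix.cons_val]
  ring

theorem sum_explicitWeights (c₂ c₃ : K) : ∑ k, explicitWeights c₂ c₃ k = 1 := by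
  simp only [explicitWeights, Fin.sum_univ_four, Matrix.cons_val]
  ring

theorem sum_implicitWeights_mul_abscissae (c₂ c₃ : K)
    (hc₃ : c₃ ^ 2 - (1 / (2 * c₂) + c₂) * c₃ + (c₂ - 1) ^ 2 = 0) :
    ∑ k, implicitWeights c₂ c₃ k * abscissae c₂ c₃ k = 1 / 2 := by
  simp only [implicitWeights, abscissae, Fin.sum_univ_four, Matrix.cons_val]
  linear_combination (-1 / 2 : K) * hc₃

theorem sum_explicitWeights_mul_abscissae {c₂ : K} (hc₂ : c₂ ≠ 0) (c₃ : K) :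
    ∑ k, explicitWeights c₂ c₃ k * abscissae c₂ c₃ k = 1 / 2 := by
  simp only [explicitWeights, abscissae, Fin.sum_univ_four, Matrix.cons_val]
  field_simp
  ring

end RIERK24

theorem ne_zero_of_sq_sub_mul_add_sub_one_sq_eq_zero {c₂ c₃ : ℝ}
    (hc₃ : c₃ ^ 2 - (1 / (2 * c₂) + c₂) * c₃ + (c₂ - 1) ^ 2 = 0) : c₂ ≠ 0 := by
  rintro rfl
  norm_num at hc₃
  nlinarith [sq_nonneg c₃]

open RIERK24 in
theorem stmt17_general (c₂ c₃ : ℝ)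
    (hc₃ : c₃ ^ 2 - (1 / (2 * c₂) + c₂) * c₃ + (c₂ - 1) ^ 2 = 0) :
    let c : Fin 4 → ℝ := ![0, c₂, c₃, 1]
    let b : Fin 4 → ℝ :=
      ![(1 + c₃ - c₂) / 2 - 1 / (4 * c₂), (1 - c₂) / 2,
        1 / (4 * c₂) + (c₂ - c₃) / 2, c₂ / 2]
    let bh : Fin 4 → ℝ := ![1 - 1 / (2 * c₂) + c₃ - c₂, 1 / (2 * c₂) - c₃, c₂, 0]
    (∑ k, b k = 1) ∧ (∑ k, bh k = 1)
    ∧ (∑ k, b k * c k = 1 / 2) ∧ (∑ k, bh k * c k = 1 / 2) :=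
  ⟨sum_implicitWeights c₂ c₃, sum_explicitWeights c₂ c₃,
    sum_implicitWeights_mul_abscissae c₂ c₃ hc₃,
    sum_explicitWeights_mul_abscissae (ne_zero_of_sq_sub_mul_add_sub_one_sq_eq_zero hc₃) c₃⟩

/-- First- and second-order conditions for the R-IERK(2,4;c₂) weight vectors. -/
theorem stmt17 (c₂ c₃ : ℝ) (hc₂ : 0 < c₂)
    (hc₃ : c₃ ^ 2 - (1 / (2 * c₂) + c₂) * c₃ + (c₂ - 1) ^ 2 = 0) :
    let c : Fin 4 → ℝ := ![0, c₂, c₃, 1]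
    let b : Fin 4 → ℝ :=
      ![(1 + c₃ - c₂) / 2 - 1 / (4 * c₂), (1 - c₂) / 2,
        1 / (4 * c₂) + (c₂ - c₃) / 2, c₂ / 2]
    let bh : Fin 4 → ℝ := ![1 - 1 / (2 * c₂) + c₃ - c₂, 1 / (2 * c₂) - c₃, c₂, 0]
    (∑ k, b k = 1) ∧ (∑ k, bh k = 1)
    ∧ (∑ k, b k * c k = 1 / 2) ∧ (∑ k, bh k * c k = 1 / 2) :=
  stmt17_general c₂ c₃ hc₃
end

section
/- Let â₅₂ be any real number and set â₅₁ := 17â₅₂/103 − 86756827361/181963162950. Define c := (0, 1, 4/5, 7/10, 12/25, 1) ∈ ℝ⁶, b := (206221/2306412, 355973/1153206, −422005/768804, 13730/192201, 553250/576603, 69125/576603), b̂ := (206221/1153206, 168575/384402, −98430/64067, 322750/192201, 138250/576603, 0), and the 6×6 lower triangular matrices A and Â by: Â strictly lower triangular with rows (0), (1, 0), (−2/5, 6/5, 0), (−98716201/164885714, 1037580218/3709928565, 756096860/741985713, 0), (â₅₁, â₅₂, 14091138538/30327193825 − 190â₅₂/103, 70â₅₂/103 + 89552314349/181963162950, 0),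 (206221/1153206, 168575/384402, −98430/64067, 322750/192201, 138250/576603, 0); and A lower triangular with rows (0), (1/2, 1/2), (−1/5, 2/5, 3/5), (−98716201/329771428, −2367068609/14839714260, 267670251/412214285, 378048430/741985713), (â₅₁/2, (â₅₁+â₅₂)/2, (â₅₂+â₅₃)/2, (â₅₃+â₅₄)/2, 35â₅₂/103 + 89552314349/363926325900) where â₅₃, â₅₄ denote the third and fourth entries of the fifth row of Â, and last row equal to b. Then all the order conditions up to third order hold: bᵀ𝟙 = 1, b̂ᵀ𝟙 = 1, bᵀc = 1/2, b̂ᵀc = 1/2, bᵀ(c⊙c) = 1/3, b̂ᵀ(c⊙c) = 1/3, bᵀAc = 1/6, b̂ᵀÂc = 1/6, bᵀÂc = 1/6, and b̂ᵀAc = 1/6, where ⊙ denotes entrywise product. Moreover the canopy node condition A𝟙 = Â𝟙 = c holds. -/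
open Matrix

/-!
Every order condition is affine in `â₅₂`, and the `â₅₂`-part of the fifth row of `Â` and of `A`,
namely `(17, 103, -190, 70, 0, 0) / 103` and `(17, 120, -87, -120, 70, 0) / 206`, is orthogonal to
both `𝟙` and `c`. Hence `A𝟙`, `Â𝟙`, `Ac` and `Âc` do not depend on `â₅₂`, and every condition
becomes an identity between rational numbers.
-/

noncomputable section

namespace RIERK

def nodes : Fin 6 → ℝ := ![0, 1, 4 / 5, 7 / 10, 12 / 25, 1]

def explicitMatrix (a52 : ℝ) : Matrix (Fin 6) (Fin 6) ℝ :=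
  let a51 : ℝ := 17 * a52 / 103 - 86756827361 / 181963162950
  let a53 : ℝ := 14091138538 / 30327193825 - 190 * a52 / 103
  let a54 : ℝ := 70 * a52 / 103 + 89552314349 / 181963162950
  !![0, 0, 0, 0, 0, 0;
     1, 0, 0, 0, 0, 0;
     -2 / 5, 6 / 5, 0, 0, 0, 0;
     -98716201 / 164885714, 1037580218 / 3709928565, 756096860 / 741985713, 0, 0, 0;
     a51, a52, a53, a54, 0, 0;
     206221 / 1153206, 168575 / 384402, -98430 / 64067, 322750 / 192201,
       138250 / 576603, 0]

def implicitMatrix (a52 : ℝ) : Matrix (Fin 6) (Fin 6) ℝ :=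
  let a51 : ℝ := 17 * a52 / 103 - 86756827361 / 181963162950
  let a53 : ℝ := 14091138538 / 30327193825 - 190 * a52 / 103
  let a54 : ℝ := 70 * a52 / 103 + 89552314349 / 181963162950
  !![0, 0, 0, 0, 0, 0;
     1 / 2, 1 / 2, 0, 0, 0, 0;
     -1 / 5, 2 / 5, 3 / 5, 0, 0, 0;
     -98716201 / 329771428, -2367068609 / 14839714260, 267670251 / 412214285,
       378048430 / 741985713, 0, 0;
     a51 / 2, (a51 + a52) / 2, (a52 + a53) / 2, (a53 + a54) / 2,
       35 * a52 / 103 + 89552314349 / 363926325900, 0;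
     206221 / 2306412, 355973 / 1153206, -422005 / 768804, 13730 / 192201,
       553250 / 576603, 69125 / 576603]

theorem explicitMatrix_mulVec_one (a52 : ℝ) : explicitMatrix a52 *ᵥ (fun _ => 1) = nodes := by
  ext i
  fin_cases i <;> simp [explicitMatrix, nodes, mulVec, dotProduct, Fin.sum_univ_six] <;> ring

theorem implicitMatrix_mulVec_one (a52 : ℝ) : implicitMatrix a52 *ᵥ (fun _ => 1) = nodes := by
  ext i
  fin_cases i <;> simp [implicitMatrix, nodes, mulVec, dotProduct, Fin.sum_univ_six] <;> ring

theorem explicitMatrix_mulVec_nodes (a52 : ℝ) :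
    explicitMatrix a52 *ᵥ nodes =
      ![0, 0, 6 / 5, 580281094 / 529989795, 12652823789 / 17666326500, 1 / 2] := by
  ext i
  fin_cases i <;> simp [explicitMatrix, nodes, mulVec, dotProduct, Fin.sum_univ_six] <;> ring

theorem implicitMatrix_mulVec_nodes (a52 : ℝ) :
    implicitMatrix a52 *ᵥ nodes =
      ![0, 1 / 2, 22 / 25, 2532026819 / 3533265300, 23581739549 / 58887755000, 1 / 2] := by
  ext i
  fin_cases i <;> simp [implicitMatrix, nodes, mulVec, dotProduct, Fin.sum_univ_six] <;> ring

end RIERK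

end

/-- The one-parameter family R-IERK(3,6;â₅₂) satisfies the canopy node condition
and all the order conditions up to third order, for every value of `â₅₂`. -/
theorem stmt18 (a52 : ℝ) :
    let a51 : ℝ := 17 * a52 / 103 - 86756827361 / 181963162950
    let a53 : ℝ := 14091138538 / 30327193825 - 190 * a52 / 103
    let a54 : ℝ := 70 * a52 / 103 + 89552314349 / 181963162950
    let c : Fin 6 → ℝ := ![0, 1, 4 / 5, 7 / 10, 12 / 25, 1]
    let b : Fin 6 → ℝ :=
      ![206221 / 2306412, 355973 / 1153206, -422005 / 768804, 13730 / 192201,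
        553250 / 576603, 69125 / 576603]
    let bh : Fin 6 → ℝ :=
      ![206221 / 1153206, 168575 / 384402, -98430 / 64067, 322750 / 192201,
        138250 / 576603, 0]
    let Ah : Matrix (Fin 6) (Fin 6) ℝ :=
      !![0, 0, 0, 0, 0, 0;
         1, 0, 0, 0, 0, 0;
         -2 / 5, 6 / 5, 0, 0, 0, 0;
         -98716201 / 164885714, 1037580218 / 3709928565, 756096860 / 741985713, 0, 0, 0;
         a51, a52, a53, a54, 0, 0;
         206221 / 1153206, 168575 / 384402, -98430 / 64067, 322750 / 192201,
           138250 / 576603, 0]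
    let A : Matrix (Fin 6) (Fin 6) ℝ :=
      !![0, 0, 0, 0, 0, 0;
         1 / 2, 1 / 2, 0, 0, 0, 0;
         -1 / 5, 2 / 5, 3 / 5, 0, 0, 0;
         -98716201 / 329771428, -2367068609 / 14839714260, 267670251 / 412214285,
           378048430 / 741985713, 0, 0;
         a51 / 2, (a51 + a52) / 2, (a52 + a53) / 2, (a53 + a54) / 2,
           35 * a52 / 103 + 89552314349 / 363926325900, 0;
         206221 / 2306412, 355973 / 1153206, -422005 / 768804, 13730 / 192201,
           553250 / 576603, 69125 / 576603]
    (∑ k, b k = 1) ∧ (∑ k, bh k = 1)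
    ∧ (∑ k, b k * c k = 1 / 2) ∧ (∑ k, bh k * c k = 1 / 2)
    ∧ (∑ k, b k * (c k * c k) = 1 / 3) ∧ (∑ k, bh k * (c k * c k) = 1 / 3)
    ∧ (b ⬝ᵥ A.mulVec c = 1 / 6) ∧ (bh ⬝ᵥ Ah.mulVec c = 1 / 6)
    ∧ (b ⬝ᵥ Ah.mulVec c = 1 / 6) ∧ (bh ⬝ᵥ A.mulVec c = 1 / 6)
    ∧ (A.mulVec (fun _ => 1) = c) ∧ (Ah.mulVec (fun _ => 1) = c) := by
  intro _ _ _ c b bh Ah A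
  have hAc : A *ᵥ c = _ := RIERK.implicitMatrix_mulVec_nodes a52
  have hAhc : Ah *ᵥ c = _ := RIERK.explicitMatrix_mulVec_nodes a52
  rw [hAc, hAhc]
  refine ⟨?_, ?_, ?_, ?_, ?_, ?_, ?_, ?_, ?_, ?_,
    RIERK.implicitMatrix_mulVec_one a52, RIERK.explicitMatrix_mulVec_one a52⟩ <;>
    norm_num [b, bh, c, dotProduct, Fin.sum_univ_succ]
end

section
/- Let â₅₂ be a real number with 2/3 ≤ â₅₂ ≤ 3/4 and set â₅₁ := 17â₅₂/103 − 86756827361/181963162950. Let A_E be the 5×5 real lower triangular matrix with rows (1, 0, 0, 0, 0), (−2/5, 6/5, 0, 0, 0), (−98716201/164885714, 1037580218/3709928565, 756096860/741985713, 0, 0), (â₅₁, â₅₂, 14091138538/30327193825 − 190â₅₂/103, 70â₅₂/103 + 89552314349/181963162950, 0), (206221/1153206, 168575/384402, −98430/64067, 322750/192201, 138250/576603), and let E₅ be the 5×5 lower triangular matrix with all entries on and below the diagonal equal to 1. Then A_E is invertible and the symmetric part S(A_E⁻¹E₅) := (A_E⁻¹E₅ + (A_E⁻¹E₅)ᵀ)/2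 is positive definite. -/
/-!
With `N(a) := E₅⁻¹ A_E(a)`, the differentiation matrix is `D = N⁻¹`, and `N D = 1` gives
`S(D) = Dᵀ S(N) D`, so `S(D)` is positive definite as soon as `S(N)` is. The entries of `N(a)`
are affine in `a`, hence so is `S(N(a))`, and by convexity of the positive definite cone it
suffices to treat the endpoints `a = 2/3` and `a = 3/4`; there `S(N)` has an exact rational
`LDLᵀ` factorization with positive pivots. `A_E` is lower triangular with nonzero diagonal.
-/

open Matrix

namespace Matrix

variable {n : Type*}

noncomputable def symmPart (M : Matrix n n ℝ) : Matrix n n ℝ :=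
  (1 / 2 : ℝ) • (M + Mᵀ)

theorem symmPart_add_smul (A B : Matrix n n ℝ) (t : ℝ) :
    symmPart (A + t • B) = symmPart A + t • symmPart B := by
  simp only [symmPart, transpose_add, transpose_smul, smul_add, smul_comm t]
  abel

theorem PosDef.add_smul_of_mem_Icc {A B : Matrix n n ℝ} {s t u : ℝ}
    (hs : (A + s • B).PosDef) (ht : (A + t • B).PosDef) (hu : u ∈ Set.Icc s t) :
    (A + u • B).PosDef := by
  obtain ⟨hsu, hut⟩ := hu
  rcases hut.eq_or_lt with rfl | hut
  · exact ht
  have hst : 0 < t - s := by linarith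
  have hcomb : A + u • B
      = ((t - u) / (t - s)) • (A + s • B) + ((u - s) / (t - s)) • (A + t • B) := by
    ext i j
    simp only [add_apply, smul_apply, smul_eq_mul]
    field_simp
    ring
  rw [hcomb]
  exact (hs.smul (div_pos (by linarith) hst)).add_posSemidef
    (ht.posSemidef.smul (div_nonneg (by linarith) hst.le))

variable [Fintype n]

theorem transpose_mul_symmPart_mul_of_mul_eq_one [DecidableEq n] {N D : Matrix n n ℝ}
    (h : N * D = 1) : Dᵀ * symmPart N * D = symmPart D := by
  rw [symmPart, symmPart, Matrix.mul_smul, Matrix.smul_mul, mul_add, add_mul, mul_assoc, h,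
    ← transpose_mul, h, transpose_one, mul_one, one_mul, add_comm]

theorem PosDef.symmPart_of_mul_eq_one [DecidableEq n] {N D : Matrix n n ℝ}
    (hN : (symmPart N).PosDef) (h : N * D = 1) : (symmPart D).PosDef := by
  have hD : Function.Injective D.mulVec := fun x y hxy => by
    simpa [mulVec_mulVec, h] using congrArg (N *ᵥ ·) hxy
  simpa [transpose_mul_symmPart_mul_of_mul_eq_one h] using hN.conjTranspose_mul_mul_same hD

theorem isUnit_det_of_isLowerTriangular [LinearOrder n] {K : Type*} [Field K]
    {M : Matrix n n K} (hM : M.IsLowerTriangular) (hdiag : ∀ i, M i i ≠ 0) : IsUnit M.det := by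
  rw [det_of_isLowerTriangular M hM, isUnit_iff_ne_zero]
  exact Finset.prod_ne_zero_iff.mpr fun i _ => hdiag i

theorem posDef_mul_diagonal_mul_transpose [DecidableEq n] {L : Matrix n n ℝ} {d : n → ℝ}
    (hL : IsUnit L.det) (hd : ∀ i, 0 < d i) : (L * diagonal d * Lᵀ).PosDef := by
  have hLinj : Function.Injective L.vecMul :=
    vecMul_injective_iff_isUnit.mpr ((isUnit_iff_isUnit_det L).mpr hL)
  simpa using (PosDef.diagonal hd).mul_mul_conjTranspose_same hLinj

end Matrix

namespace RIERK36

noncomputable def explicitMatrix (a : ℝ) : Matrix (Fin 5) (Fin 5) ℝ :=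
  !![1, 0, 0, 0, 0;
     -2 / 5, 6 / 5, 0, 0, 0;
     -98716201 / 164885714, 1037580218 / 3709928565, 756096860 / 741985713, 0, 0;
     17 * a / 103 - 86756827361 / 181963162950, a, 14091138538 / 30327193825 - 190 * a / 103,
       70 * a / 103 + 89552314349 / 181963162950, 0;
     206221 / 1153206, 168575 / 384402, -98430 / 64067, 322750 / 192201,
       138250 / 576603]

noncomputable def lowerOnes : Matrix (Fin 5) (Fin 5) ℝ :=
  of fun i j => if j ≤ i then 1 else 0

-- Row `i` of `inverseDiff₀ + a • inverseDiff₁` is row `i` minus row `i - 1` of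
-- `explicitMatrix a`, i.e. the sum is `lowerOnes⁻¹ * explicitMatrix a`.
noncomputable def inverseDiff₀ : Matrix (Fin 5) (Fin 5) ℝ :=
  !![1, 0, 0, 0, 0;
     -7 / 5, 6 / 5, 0, 0, 0;
     -163809577 / 824428570, -682866812 / 741985713, 756096860 / 741985713, 0, 0;
     77642430599 / 636871070325, -1037580218 / 3709928565, -1059207686606 / 1910613210975,
       89552314349 / 181963162950, 0;
     11464426606698443 / 17486750941076475, 168575 / 384402, -3887882660908796 / 1942972326786275,
       13838855490640117 / 11657833960717650, 138250 / 576603]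

noncomputable def inverseDiff₁ : Matrix (Fin 5) (Fin 5) ℝ :=
  !![0, 0, 0, 0, 0;
     0, 0, 0, 0, 0;
     0, 0, 0, 0, 0;
     17 / 103, 1, -190 / 103, 70 / 103, 0;
     -17 / 103, -1, 190 / 103, -70 / 103, 0]

set_option maxHeartbeats 1000000 in
theorem lowerOnes_mul_inverseDiff (a : ℝ) :
    lowerOnes * (inverseDiff₀ + a • inverseDiff₁) = explicitMatrix a := by
  ext i j
  fin_cases i <;> fin_cases j <;>
    simp [lowerOnes, inverseDiff₀, inverseDiff₁, explicitMatrix, mul_apply, Fin.sum_univ_five] <;>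
    ring

theorem explicitMatrix_isLowerTriangular (a : ℝ) : (explicitMatrix a).IsLowerTriangular := by
  intro i j hij
  rw [OrderDual.toDual_lt_toDual] at hij
  fin_cases i <;> fin_cases j <;> first | rfl | exact absurd hij (by decide)

theorem isUnit_det_explicitMatrix {a : ℝ} (ha : 70 * a / 103 + 89552314349 / 181963162950 ≠ 0) :
    IsUnit (explicitMatrix a).det := by
  refine isUnit_det_of_isLowerTriangular (explicitMatrix_isLowerTriangular a) fun i => ?_
  fin_cases i <;> simp [explicitMatrix, ha]

noncomputable def ldlFactor₂₃ : Matrix (Fin 5) (Fin 5) ℝ :=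
  !![1, 0, 0, 0, 0;
     -7 / 10, 1, 0, 0, 0;
     -163809577 / 1648857140, -78606684551 / 105361971246, 1, 0, 0;
     49239619683 / 424580713550, 10495979323829 / 27130707595845,
       -12364401358508928956762 / 11235708607982969681945, 1, 0;
     9540318088910093 / 34973501882152950, 26889987500934776 / 248311863363285945,
       -15535756427234446166825607679 / 31672878309056376418979493860,
       -79527420518125919544389528716558238774590841 / 253016051425961627147684512158089056795005186,
       1]

noncomputable def ldlDiag₂₃ : Fin 5 → ℝ :=
  ![1, 71 / 100, 239986009102548866993 / 390885386790244041990,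
    59836991536313458578090009028921204363 / 729667492569125591719968182554241074250,
    466052325725571018127297064375653279000081829645591 /
      385149109752960305539343918496671248456049790694737120]

set_option maxHeartbeats 2000000 in
theorem symmPart_inverseDiff_two_thirds :
    symmPart (inverseDiff₀ + (2 / 3 : ℝ) • inverseDiff₁)
      = ldlFactor₂₃ * diagonal ldlDiag₂₃ * ldlFactor₂₃ᵀ := by
  ext i j
  rw [mul_apply]
  simp only [mul_diagonal, transpose_apply, Fin.sum_univ_five]
  fin_cases i <;> fin_cases j <;>
    norm_num [symmPart, inverseDiff₀, inverseDiff₁, ldlFactor₂₃, ldlDiag₂₃, cons_val_two,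
      cons_val_three, cons_val_four, vecHead, vecTail]

theorem ldlFactor₂₃_isLowerTriangular : ldlFactor₂₃.IsLowerTriangular := by
  intro i j hij
  rw [OrderDual.toDual_lt_toDual] at hij
  fin_cases i <;> fin_cases j <;> first | rfl | exact absurd hij (by decide)

theorem posDef_symmPart_inverseDiff_two_thirds :
    (symmPart (inverseDiff₀ + (2 / 3 : ℝ) • inverseDiff₁)).PosDef := by
  rw [symmPart_inverseDiff_two_thirds]
  refine posDef_mul_diagonal_mul_transpose
    (isUnit_det_of_isLowerTriangular ldlFactor₂₃_isLowerTriangular fun i => ?_) fun i => ?_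
  · fin_cases i <;> simp [ldlFactor₂₃]
  · fin_cases i <;> norm_num [ldlDiag₂₃]

noncomputable def ldlFactor₃₄ : Matrix (Fin 5) (Fin 5) ℝ :=
  !![1, 0, 0, 0, 0;
     -7 / 10, 1, 0, 0, 0;
     -163809577 / 1648857140, -78606684551 / 105361971246, 1, 0, 0;
     625913650421 / 5094968562600, 49088430497291 / 108522830383380,
       -104991017167770335902471 / 89885668863863757455560, 1, 0;
     37199218096746197 / 139894007528611800, 42536400387891629 / 993247453453143780,
       -26789667350237985650364162983 / 63345756618112752837958987720,
       -9787434700061221785705608158631623443068113333 / 3419100938287115471447353628682832357460929443,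
       1]

noncomputable def ldlDiag₃₄ : Fin 5 → ℝ :=
  ![1, 71 / 100, 239986009102548866993 / 390885386790244041990,
    1617199484009455759830666678341391827713 / 420288475719816340830701673151242858768000,
    2864418327858741500512791101514109578152516890044071 /
      108430512207554110320062714439767395219497436479217095]

set_option maxHeartbeats 2000000 in
theorem symmPart_inverseDiff_three_fourths :
    symmPart (inverseDiff₀ + (3 / 4 : ℝ) • inverseDiff₁)
      = ldlFactor₃₄ * diagonal ldlDiag₃₄ * ldlFactor₃₄ᵀ := by
  ext i j
  rw [mul_apply]
  simp only [mul_diagonal, transpose_apply, Fin.sum_univ_five]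
  fin_cases i <;> fin_cases j <;>
    norm_num [symmPart, inverseDiff₀, inverseDiff₁, ldlFactor₃₄, ldlDiag₃₄, cons_val_two,
      cons_val_three, cons_val_four, vecHead, vecTail]

theorem ldlFactor₃₄_isLowerTriangular : ldlFactor₃₄.IsLowerTriangular := by
  intro i j hij
  rw [OrderDual.toDual_lt_toDual] at hij
  fin_cases i <;> fin_cases j <;> first | rfl | exact absurd hij (by decide)

theorem posDef_symmPart_inverseDiff_three_fourths :
    (symmPart (inverseDiff₀ + (3 / 4 : ℝ) • inverseDiff₁)).PosDef := by
  rw [symmPart_inverseDiff_three_fourths]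
  refine posDef_mul_diagonal_mul_transpose
    (isUnit_det_of_isLowerTriangular ldlFactor₃₄_isLowerTriangular fun i => ?_) fun i => ?_
  · fin_cases i <;> simp [ldlFactor₃₄]
  · fin_cases i <;> norm_num [ldlDiag₃₄]

theorem posDef_symmPart_inverseDiff {a : ℝ} (h₁ : 2 / 3 ≤ a) (h₂ : a ≤ 3 / 4) :
    (symmPart (inverseDiff₀ + a • inverseDiff₁)).PosDef := by
  have h₂₃ := posDef_symmPart_inverseDiff_two_thirds
  have h₃₄ := posDef_symmPart_inverseDiff_three_fourths
  rw [symmPart_add_smul] at h₂₃ h₃₄ ⊢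
  exact h₂₃.add_smul_of_mem_Icc h₃₄ ⟨h₁, h₂⟩

end RIERK36

/-- For `2/3 ≤ â₅₂ ≤ 3/4`, the explicit Butcher submatrix `A_E` of the
R-IERK(3,6;â₅₂) method is invertible and the symmetric part of its
differentiation matrix `A_E⁻¹E₅` is positive definite. -/
theorem stmt19 (a52 : ℝ) (h1 : 2 / 3 ≤ a52) (h2 : a52 ≤ 3 / 4) :
    let a51 : ℝ := 17 * a52 / 103 - 86756827361 / 181963162950
    let AE : Matrix (Fin 5) (Fin 5) ℝ :=
      !![1, 0, 0, 0, 0;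
         -2 / 5, 6 / 5, 0, 0, 0;
         -98716201 / 164885714, 1037580218 / 3709928565, 756096860 / 741985713, 0, 0;
         a51, a52, 14091138538 / 30327193825 - 190 * a52 / 103,
           70 * a52 / 103 + 89552314349 / 181963162950, 0;
         206221 / 1153206, 168575 / 384402, -98430 / 64067, 322750 / 192201,
           138250 / 576603]
    let E : Matrix (Fin 5) (Fin 5) ℝ :=
      Matrix.of fun i j => if j ≤ i then 1 else 0
    IsUnit AE.det
    ∧ ((1 / 2 : ℝ) • (AE⁻¹ * E + (AE⁻¹ * E)ᵀ)).PosDef := by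
  intro a51 AE E
  have hAE : IsUnit AE.det := RIERK36.isUnit_det_explicitMatrix (by linarith)
  have hND : (RIERK36.inverseDiff₀ + a52 • RIERK36.inverseDiff₁) * (AE⁻¹ * E) = 1 := by
    rw [mul_eq_one_comm, mul_assoc]
    change AE⁻¹ * (RIERK36.lowerOnes * _) = 1
    rw [RIERK36.lowerOnes_mul_inverseDiff]
    exact nonsing_inv_mul _ hAE
  exact ⟨hAE, (RIERK36.posDef_symmPart_inverseDiff h1 h2).symmPart_of_mul_eq_one hND⟩
end
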